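/- arXiv:1701.05708 — 2 statements merged into one kernel-verified Lean document; each statement's English description precedes it below -/
import Mathlib

section
/- Let V = (V_k, V_k^⊥) be an n×n orthogonal matrix with V_k having k columns, and let Δ ∈ ℝ^{(n-k)×k}. Define Ẑ = (V_k + V_k^⊥ Δ)(I + ΔᵀΔ)^{-1/2}. Then Ẑ has orthonormal columns and ‖(V_k^⊥)ᵀ Ẑ‖₂ = ‖Δ‖₂ / √(1 + ‖Δ‖₂²). -/
/-!
Since `Vₖ` and `V⊥` have orthonormal, mutually orthogonal columns, the Gram matrix of
`Vₖ + V⊥ Δ` is `M = 1 + ΔᵀΔ`, and `(V⊥)ᵀ Ẑ = Δ S`. As `S` commutes with `S² = M⁻¹`, it commutes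
with `M`, so `Ẑᵀ Ẑ = S M S = 1` and `(Δ S)ᵀ (Δ S) = S (M - 1) S = 1 - M⁻¹`. The spectral norm of
`1 - (1 + a)⁻¹ = cfc (x ↦ x / (1 + x)) a` for `a = ΔᵀΔ ≥ 0` is obtained by evaluating the
increasing function `x ↦ x / (1 + x)` at the top of the spectrum, `‖a‖ = ‖Δ‖²`.
-/

open Matrix
open scoped Matrix.Norms.L2Operator

section Isometric

variable {A : Type*} [NormedRing A] [StarRing A] [NormedAlgebra ℝ A]
  [IsometricContinuousFunctionalCalculus ℝ A IsSelfAdjoint]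

theorem norm_cfc_eq_apply_norm_of_monotoneOn [Nontrivial A] {f : ℝ → ℝ} {a : A}
    (ha : IsSelfAdjoint a) (hspec : ∀ x ∈ spectrum ℝ a, 0 ≤ x)
    (hf : MonotoneOn f (Set.Ici 0)) (hf₀ : 0 ≤ f 0)
    (hcont : ContinuousOn f (spectrum ℝ a)) :
    ‖cfc f a‖ = f ‖a‖ := by
  have hfnn : ∀ x, 0 ≤ x → 0 ≤ f x := fun x hx => hf₀.trans (hf Set.self_mem_Ici hx hx)
  obtain ⟨⟨x, hx, hxa⟩, -⟩ :=
    IsometricContinuousFunctionalCalculus.isGreatest_norm_spectrum (𝕜 := ℝ) a ha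
  refine (IsGreatest.norm_cfc f a hcont ha).unique ⟨⟨x, hx, ?_⟩, ?_⟩
  · dsimp only at hxa ⊢
    rw [← hxa, Real.norm_of_nonneg (hspec x hx), Real.norm_of_nonneg (hfnn x (hspec x hx))]
  · rintro _ ⟨y, hy, rfl⟩
    have hy₀ := hspec y hy
    dsimp only
    rw [Real.norm_of_nonneg (hfnn y hy₀)]
    refine hf hy₀ (norm_nonneg a) ?_
    simpa [Real.norm_of_nonneg hy₀] using
      IsometricContinuousFunctionalCalculus.norm_spectrum_le (𝕜 := ℝ) a hy ha

theorem norm_one_sub_ringInverse_one_add {a : A}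
    (ha : IsSelfAdjoint a) (hspec : ∀ x ∈ spectrum ℝ a, 0 ≤ x) :
    ‖1 - Ring.inverse (1 + a)‖ = ‖a‖ / (1 + ‖a‖) := by
  nontriviality A
  have hpos : ∀ x ∈ spectrum ℝ a, 1 + x ≠ 0 := fun x hx => by linarith [hspec x hx]
  have hcfc : cfc (fun x : ℝ => x / (1 + x)) a = 1 - Ring.inverse (1 + a) := by
    have heq : Set.EqOn (fun x : ℝ => x / (1 + x)) (fun x => 1 - (1 + x)⁻¹) (spectrum ℝ a) :=
      fun x hx => by field_simp [hpos x hx]; ring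
    rw [cfc_congr heq, cfc_sub (fun _ => 1) (fun x => (1 + x)⁻¹) a continuousOn_const
        ((continuousOn_const.add continuousOn_id).inv₀ hpos),
      cfc_inv (fun x => 1 + x) a hpos, cfc_const_add (1 : ℝ) (fun x => x) a, cfc_const_one ℝ a,
      cfc_id' ℝ a, map_one]
  rw [← hcfc]
  refine norm_cfc_eq_apply_norm_of_monotoneOn ha hspec ?_ (by simp) ?_
  · intro x hx y hy hxy
    rw [div_le_div_iff₀ (by linarith [Set.mem_Ici.mp hx]) (by linarith [Set.mem_Ici.mp hy])]
    linarith
  · exact continuousOn_id.div (continuousOn_id.const_add 1) hpos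

end Isometric

theorem mul_mul_eq_one_of_mul_self_eq_ringInverse {M₀ : Type*} [MonoidWithZero M₀] {s m : M₀}
    (hm : IsUnit m) (hs : s * s = Ring.inverse m) : s * m * s = 1 := by
  lift m to M₀ˣ using hm
  rw [Ring.inverse_unit] at hs
  have hcomm : Commute s m := Commute.units_inv_right_iff.mp (hs ▸ Commute.mul_right rfl rfl)
  rw [hcomm.eq, mul_assoc, hs, Units.mul_inv]

namespace Matrix

section Orthonormal

variable {ι κ μ R : Type*} [Fintype ι] [Fintype μ] [DecidableEq μ] [CommRing R]
  {Vk : Matrix ι κ R} {Vp : Matrix ι μ R}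

theorem transpose_mul_self_add_mul_of_orthonormal [DecidableEq κ]
    (hVk : Vkᵀ * Vk = 1) (hVp : Vpᵀ * Vp = 1) (hVkp : Vkᵀ * Vp = 0) (Δ : Matrix μ κ R) :
    (Vk + Vp * Δ)ᵀ * (Vk + Vp * Δ) = 1 + Δᵀ * Δ := by
  have hVpk : Vpᵀ * Vk = 0 := by
    rw [← transpose_transpose Vk, ← transpose_mul, hVkp, transpose_zero]
  rw [transpose_add, transpose_mul, Matrix.add_mul, Matrix.mul_add, Matrix.mul_add, hVk,
    ← Matrix.mul_assoc Vkᵀ, hVkp, Matrix.mul_assoc Δᵀ, hVpk, Matrix.mul_assoc Δᵀ,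
    ← Matrix.mul_assoc Vpᵀ, hVp]
  simp

theorem transpose_mul_add_mul_of_orthonormal
    (hVp : Vpᵀ * Vp = 1) (hVkp : Vkᵀ * Vp = 0) (Δ : Matrix μ κ R) :
    Vpᵀ * (Vk + Vp * Δ) = Δ := by
  have hVpk : Vpᵀ * Vk = 0 := by
    rw [← transpose_transpose Vk, ← transpose_mul, hVkp, transpose_zero]
  rw [Matrix.mul_add, hVpk, ← Matrix.mul_assoc, hVp, Matrix.one_mul, zero_add]

end Orthonormal

section InvSqrt

variable {κ μ : Type*} [Fintype κ] [Fintype μ]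

theorem posSemidef_transpose_mul_self (Δ : Matrix μ κ ℝ) : (Δᵀ * Δ).PosSemidef := by
  simpa only [conjTranspose_eq_transpose_of_trivial] using posSemidef_conjTranspose_mul_self Δ

variable [DecidableEq κ] {Δ : Matrix μ κ ℝ} {S : Matrix κ κ ℝ}

theorem mul_one_add_transpose_mul_self_mul (hS : S * S = (1 + Δᵀ * Δ)⁻¹) :
    S * (1 + Δᵀ * Δ) * S = 1 :=
  mul_mul_eq_one_of_mul_self_eq_ringInverse
    (PosDef.one.add_posSemidef (posSemidef_transpose_mul_self Δ)).isUnit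
    (hS.trans (nonsing_inv_eq_ringInverse _))

theorem transpose_mul_self_mul_of_mul_self_eq_inv (hSt : Sᵀ = S)
    (hS : S * S = (1 + Δᵀ * Δ)⁻¹) :
    (Δ * S)ᵀ * (Δ * S) = 1 - Ring.inverse (1 + Δᵀ * Δ) :=
  calc (Δ * S)ᵀ * (Δ * S) = S * (1 + Δᵀ * Δ) * S - S * S := by
        rw [transpose_mul, hSt, Matrix.mul_add, Matrix.add_mul, Matrix.mul_one]
        simp only [Matrix.mul_assoc, add_sub_cancel_left]
    _ = 1 - Ring.inverse (1 + Δᵀ * Δ) := by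
        rw [mul_one_add_transpose_mul_self_mul hS, hS, nonsing_inv_eq_ringInverse]

theorem l2_opNorm_mul_of_mul_self_eq_inv (hSt : Sᵀ = S) (hS : S * S = (1 + Δᵀ * Δ)⁻¹) :
    ‖Δ * S‖ = ‖Δ‖ / Real.sqrt (1 + ‖Δ‖ ^ 2) := by
  have hΔΔ := posSemidef_transpose_mul_self Δ
  have hsq : ‖Δ * S‖ * ‖Δ * S‖ = ‖Δ‖ * ‖Δ‖ / (1 + ‖Δ‖ * ‖Δ‖) := by
    rw [← l2_opNorm_conjTranspose_mul_self, ← l2_opNorm_conjTranspose_mul_self Δ,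
      conjTranspose_eq_transpose_of_trivial, conjTranspose_eq_transpose_of_trivial,
      transpose_mul_self_mul_of_mul_self_eq_inv hSt hS]
    exact norm_one_sub_ringInverse_one_add hΔΔ.isHermitian.isSelfAdjoint
      (posSemidef_iff_isHermitian_and_spectrum_nonneg.mp hΔΔ).2
  rw [← Real.sqrt_mul_self (norm_nonneg (Δ * S)), hsq, Real.sqrt_div' _ (by positivity),
    Real.sqrt_mul_self (norm_nonneg Δ), sq]

end InvSqrt

end Matrix

theorem stmt1_general (n k m : ℕ)
    (Vk : Matrix (Fin n) (Fin k) ℝ) (Vp : Matrix (Fin n) (Fin m) ℝ)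
    (hVk : Vkᵀ * Vk = 1) (hVp : Vpᵀ * Vp = 1) (hVkp : Vkᵀ * Vp = 0)
    (Δ : Matrix (Fin m) (Fin k) ℝ) (S : Matrix (Fin k) (Fin k) ℝ)
    (hSpd : S.PosDef) (hS : S * S = (1 + Δᵀ * Δ)⁻¹)
    (Zhat : Matrix (Fin n) (Fin k) ℝ) (hZ : Zhat = (Vk + Vp * Δ) * S) :
    Zhatᵀ * Zhat = 1 ∧ ‖Vpᵀ * Zhat‖ = ‖Δ‖ / Real.sqrt (1 + ‖Δ‖ ^ 2) := by
  have hSt : Sᵀ = S := hSpd.isHermitian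
  subst hZ
  constructor
  · rw [transpose_mul, hSt, Matrix.mul_assoc, ← Matrix.mul_assoc (Vk + Vp * Δ)ᵀ,
      transpose_mul_self_add_mul_of_orthonormal hVk hVp hVkp, ← Matrix.mul_assoc]
    exact mul_one_add_transpose_mul_self_mul hS
  · rw [← Matrix.mul_assoc, transpose_mul_add_mul_of_orthonormal hVp hVkp]
    exact l2_opNorm_mul_of_mul_self_eq_inv hSt hS

/-- Let `V = (V_k, V_k^⊥)` be an orthogonal matrix and `Δ` a real matrix, and let
`S` be the inverse square root of `I + ΔᵀΔ`. Then `Ẑ = (V_k + V_k^⊥ Δ) S` has orthonormal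
columns and `‖(V_k^⊥)ᵀ Ẑ‖₂ = ‖Δ‖₂ / √(1 + ‖Δ‖₂²)` (spectral norms). -/
theorem stmt1 (n k m : ℕ) (hnk : n = k + m)
    (Vk : Matrix (Fin n) (Fin k) ℝ) (Vp : Matrix (Fin n) (Fin m) ℝ)
    (hVk : Vkᵀ * Vk = 1) (hVp : Vpᵀ * Vp = 1) (hVkp : Vkᵀ * Vp = 0)
    (hcomplete : Vk * Vkᵀ + Vp * Vpᵀ = 1)
    (Δ : Matrix (Fin m) (Fin k) ℝ) (S : Matrix (Fin k) (Fin k) ℝ)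
    (hSpd : S.PosDef) (hS : S * S = (1 + Δᵀ * Δ)⁻¹)
    (Zhat : Matrix (Fin n) (Fin k) ℝ) (hZ : Zhat = (Vk + Vp * Δ) * S) :
    Zhatᵀ * Zhat = 1 ∧ ‖Vpᵀ * Zhat‖ = ‖Δ‖ / Real.sqrt (1 + ‖Δ‖ ^ 2) :=
  stmt1_general n k m Vk Vp hVk hVp hVkp Δ S hSpd hS Zhat hZ
end

section
/- Let α > 1/2 and k ≥ 2α + 1 an integer. Then ∏_{i=1}^{k-1} 1/(1 - (i/k)^{2α}) > k/(2α+1). -/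
/-!
Put `p = 2α` and `x_i = (i/k)^p ∈ [0, 1)`. Then `1/(1 - x_i) ≥ 1 + x_i`, and expanding the product
gives `∏ (1 + x_i) ≥ 1 + ∑ x_i`. Comparing `∑ i^p` with `∫₀^{k-1} x^p dx` yields
`∑ x_i ≥ (k-1)^{p+1} / ((p+1) k^p)`, and Bernoulli's inequality
`(1 - 1/k)^{p+1} > 1 - (p+1)/k` turns this into `1 + ∑ x_i > k/(p+1)`.
-/

open Finset Real

theorem Finset.one_add_sum_le_prod_one_add {ι R : Type*} [CommSemiring R] [PartialOrder R]
    [IsOrderedRing R] (s : Finset ι) {f : ι → R} (hf : ∀ i ∈ s, 0 ≤ f i) :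
    1 + ∑ i ∈ s, f i ≤ ∏ i ∈ s, (1 + f i) := by
  classical
  induction s using Finset.cons_induction with
  | empty => simp
  | cons a s ha ih =>
    rw [sum_cons, prod_cons]
    have hfa : 0 ≤ f a := hf a (mem_cons_self a s)
    have hs : ∀ i ∈ s, 0 ≤ f i := fun i hi => hf i (mem_cons_of_mem hi)
    calc 1 + (f a + ∑ i ∈ s, f i)
        ≤ 1 + (f a + ∑ i ∈ s, f i) + f a * ∑ i ∈ s, f i :=
          le_add_of_nonneg_right (mul_nonneg hfa (sum_nonneg hs))
      _ = (1 + f a) * (1 + ∑ i ∈ s, f i) := by ring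
      _ ≤ (1 + f a) * ∏ i ∈ s, (1 + f i) :=
          mul_le_mul_of_nonneg_left (ih hs) (add_nonneg zero_le_one hfa)

theorem one_add_le_one_div_one_sub {K : Type*} [Field K] [LinearOrder K] [IsStrictOrderedRing K]
    {x : K} (hx₀ : 0 ≤ x) (hx₁ : x < 1) : 1 + x ≤ 1 / (1 - x) := by
  rw [le_div_iff₀ (sub_pos.mpr hx₁)]
  nlinarith

theorem Real.rpow_add_one_div_le_sum_Icc_rpow {p : ℝ} (hp : 0 ≤ p) (n : ℕ) :
    (n : ℝ) ^ (p + 1) / (p + 1) ≤ ∑ i ∈ Icc 1 n, (i : ℝ) ^ p := by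
  have hmono : MonotoneOn (fun x : ℝ => x ^ p) (Set.Icc 0 n) :=
    (monotoneOn_rpow_Ici_of_exponent_nonneg hp).mono Set.Icc_subset_Ici_self
  have hintegral := MonotoneOn.integral_le_sum_Ico (Nat.zero_le n) (by rwa [Nat.cast_zero])
  rw [integral_rpow (Or.inl (by linarith)), Nat.cast_zero,
    zero_rpow (by linarith : p + 1 ≠ 0), sub_zero] at hintegral
  rwa [sum_Ico_add' (fun i : ℕ => (i : ℝ) ^ p), zero_add, Ico_add_one_right_eq_Icc] at hintegral

theorem Real.rpow_sub_mul_rpow_sub_one_lt_sub_one_rpow {x q : ℝ} (hx : 1 ≤ x) (hq : 1 < q) :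
    x ^ q - q * x ^ (q - 1) < (x - 1) ^ q := by
  have hx₀ : 0 < x := zero_lt_one.trans_le hx
  have hbernoulli : 1 + q * -x⁻¹ < (1 + -x⁻¹) ^ q :=
    one_add_mul_self_lt_rpow_one_add (neg_le_neg (inv_le_one_of_one_le₀ hx))
      (neg_ne_zero.mpr (inv_ne_zero hx₀.ne')) hq
  have hlhs : x ^ q - q * x ^ (q - 1) = x ^ q * (1 + q * -x⁻¹) := by
    rw [rpow_sub_one hx₀.ne']
    ring
  have hrhs : (x - 1) ^ q = x ^ q * (1 + -x⁻¹) ^ q := by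
    rw [← mul_rpow hx₀.le (by simpa [← sub_eq_add_neg] using inv_le_one_of_one_le₀ hx)]
    congr 1
    field_simp
    ring
  rw [hlhs, hrhs]
  exact mul_lt_mul_of_pos_left hbernoulli (rpow_pos_of_pos hx₀ q)

theorem Real.div_add_one_lt_one_add_sum_div_rpow {p : ℝ} (hp : 0 < p) (k : ℕ) :
    (k : ℝ) / (p + 1) < 1 + ∑ i ∈ Icc 1 (k - 1), ((i : ℝ) / k) ^ p := by
  rcases Nat.eq_zero_or_pos k with rfl | hk
  · simp
  have hk₁ : (1 : ℝ) ≤ k := by exact_mod_cast hk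
  have hk₀ : (0 : ℝ) < k := zero_lt_one.trans_le hk₁
  have hsum : ∑ i ∈ Icc 1 (k - 1), ((i : ℝ) / k) ^ p
      = (∑ i ∈ Icc 1 (k - 1), (i : ℝ) ^ p) / k ^ p := by
    rw [sum_div]
    exact sum_congr rfl fun i _ => div_rpow (Nat.cast_nonneg i) hk₀.le p
  have hintegral := rpow_add_one_div_le_sum_Icc_rpow hp.le (k - 1)
  rw [Nat.cast_sub hk, Nat.cast_one] at hintegral
  have hbernoulli := rpow_sub_mul_rpow_sub_one_lt_sub_one_rpow hk₁ (by linarith : 1 < p + 1)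
  rw [add_sub_cancel_right] at hbernoulli
  calc (k : ℝ) / (p + 1) = 1 + (k ^ (p + 1) - (p + 1) * k ^ p) / (p + 1) / k ^ p := by
        rw [rpow_add_one hk₀.ne']
        field_simp
        ring
    _ < 1 + (k - 1) ^ (p + 1) / (p + 1) / k ^ p := by gcongr
    _ ≤ 1 + (∑ i ∈ Icc 1 (k - 1), (i : ℝ) ^ p) / k ^ p := by gcongr
    _ = 1 + ∑ i ∈ Icc 1 (k - 1), ((i : ℝ) / k) ^ p := by rw [hsum]

theorem stmt9_general (α : ℝ) (hα : 1 / 2 < α) (k : ℕ) :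
    (k : ℝ) / (2 * α + 1) <
      ∏ i ∈ Finset.Icc 1 (k - 1), 1 / (1 - ((i : ℝ) / k) ^ (2 * α)) := by
  have hp : 0 < 2 * α := by linarith
  have hx : ∀ i ∈ Icc 1 (k - 1), 0 ≤ ((i : ℝ) / k) ^ (2 * α) ∧ ((i : ℝ) / k) ^ (2 * α) < 1 := by
    intro i hi
    have hik : i < k := by grind
    refine ⟨by positivity, rpow_lt_one (by positivity) ?_ hp⟩
    rw [div_lt_one (by exact_mod_cast (Nat.zero_le i).trans_lt hik)]
    exact_mod_cast hik
  calc (k : ℝ) / (2 * α + 1)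
      < 1 + ∑ i ∈ Icc 1 (k - 1), ((i : ℝ) / k) ^ (2 * α) :=
        div_add_one_lt_one_add_sum_div_rpow hp k
    _ ≤ ∏ i ∈ Icc 1 (k - 1), (1 + ((i : ℝ) / k) ^ (2 * α)) :=
        one_add_sum_le_prod_one_add _ fun i hi => (hx i hi).1
    _ ≤ ∏ i ∈ Icc 1 (k - 1), 1 / (1 - ((i : ℝ) / k) ^ (2 * α)) :=
        prod_le_prod (fun i hi => by linarith [(hx i hi).1])
          fun i hi => one_add_le_one_div_one_sub (hx i hi).1 (hx i hi).2

/-- For `α > 1/2` and integer `k ≥ 2α + 1`,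
`∏_{i=1}^{k-1} 1/(1 - (i/k)^{2α}) > k/(2α+1)`. -/
theorem stmt9 (α : ℝ) (hα : 1 / 2 < α) (k : ℕ) (hk : 2 * α + 1 ≤ (k : ℝ)) :
    (k : ℝ) / (2 * α + 1) <
      ∏ i ∈ Finset.Icc 1 (k - 1), 1 / (1 - ((i : ℝ) / k) ^ (2 * α)) :=
  stmt9_general α hα k
end
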